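/- For every x ∈ ℝ, the principal value (1/π)·PV∫ u'(y)/(x−y) dy with u(y) = y·(1+y²)^{−1/2} exists and equals (2x·(x²+1)^{1/2} + 2·arsinh(x))/(π·(x²+1)^{3/2}); that is, the half Laplacian of x(1+x²)^{−1/2} equals (2x√(x²+1) + 2·arsinh(x))/(π(x²+1)^{3/2}). -/

import Mathlib

open Filter MeasureTheory

noncomputable def rr (y : ℝ) : ℝ := Real.sqrt (1 + y ^ 2)
noncomputable def gg (x y : ℝ) : ℝ := (rr y ^ 3)⁻¹ / (x - y)
noncomputable def NN (x y : ℝ) : ℝ := x * y + 1 + rr x * rr y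
noncomputable def GG (x y : ℝ) : ℝ :=
  (1 + x ^ 2)⁻¹ * ((rr x)⁻¹ * (Real.log (NN x y) - Real.log (y - x)) + (x * y - 1) / rr y)
noncomputable def LL (x : ℝ) : ℝ := (1 + x ^ 2)⁻¹ * ((rr x)⁻¹ * Real.log (x + rr x) + x)

lemma rr_pos (y : ℝ) : 0 < rr y := Real.sqrt_pos.2 (by positivity)

lemma rr_sq (y : ℝ) : rr y ^ 2 = 1 + y ^ 2 := Real.sq_sqrt (by positivity)

lemma rr_neg (y : ℝ) : rr (-y) = rr y := by simp [rr]

lemma abs_lt_rr (y : ℝ) : |y| < rr y := by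
  rw [← Real.sqrt_sq_eq_abs]
  exact Real.sqrt_lt_sqrt (sq_nonneg y) (by linarith)

lemma add_rr_pos (y : ℝ) : 0 < y + rr y := by
  have := abs_lt_rr y
  have := neg_abs_le y
  linarith

lemma NN_pos (x y : ℝ) : 0 < NN x y := by
  have hr := rr_pos y
  have hs := rr_pos x
  have hr2 := rr_sq y
  have hs2 := rr_sq x
  unfold NN
  nlinarith [sq_nonneg (x - y), sq_nonneg (x * y + 1), mul_pos hs hr]

lemma NN_symm (x y : ℝ) : NN (-x) (-y) = NN x y := by
  unfold NN; rw [rr_neg, rr_neg]; ring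

lemma continuous_rr : Continuous rr :=
  Real.continuous_sqrt.comp (by continuity)

lemma continuous_NN (x : ℝ) : Continuous (NN x) := by
  unfold NN
  exact (((continuous_const.mul continuous_id).add continuous_const)).add
    (continuous_const.mul continuous_rr)

lemma hasDerivAt_rr (y : ℝ) : HasDerivAt rr (y / rr y) y := by
  have h1 : HasDerivAt (fun y : ℝ => 1 + y ^ 2) (2 * y) y := by
    simpa using ((hasDerivAt_pow 2 y).const_add 1)
  have h2 := (Real.hasDerivAt_sqrt (by positivity : (1 : ℝ) + y ^ 2 ≠ 0)).comp y h1
  refine h2.congr_deriv (Eq.symm ?_)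
  rw [rr]
  field_simp

lemma GG_symm (x y : ℝ) : GG (-x) (-y) = GG x y := by
  unfold GG
  rw [NN_symm, rr_neg, rr_neg]
  rw [show -y - -x = -(y - x) by ring, Real.log_neg_eq_log]
  ring_nf

lemma gg_neg (x t : ℝ) : gg x (-t) = -gg (-x) t := by
  unfold gg; rw [rr_neg]
  rw [show x - -t = -(-x - t) by ring, div_neg]

lemma rpow_half (t : ℝ) (ht : 0 < t) : t ^ (-(1:ℝ)/2) = (Real.sqrt t)⁻¹ := by
  rw [Real.sqrt_eq_rpow, show (-(1:ℝ)/2) = -(1/2) by norm_num, Real.rpow_neg ht.le]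

lemma rpow_threehalf (t : ℝ) (ht : 0 < t) : t ^ (-(1:ℝ)/2 - 1) = (Real.sqrt t ^ 3)⁻¹ := by
  rw [show (-(1:ℝ)/2 - 1) = -(3/2) by norm_num, Real.rpow_neg ht.le,
    show ((3:ℝ)/2) = (1/2) * (3:ℕ) by norm_num, Real.rpow_mul ht.le, Real.rpow_natCast,
    Real.sqrt_eq_rpow]

lemma deriv_u (y : ℝ) :
    deriv (fun y : ℝ => y * (1 + y ^ 2) ^ (-(1 : ℝ) / 2)) y = (rr y ^ 3)⁻¹ := by
  have ht : (0:ℝ) < 1 + y ^ 2 := by positivity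
  have h1 : HasDerivAt (fun y : ℝ => 1 + y ^ 2) (2 * y) y := by
    simpa using ((hasDerivAt_pow 2 y).const_add 1)
  have h2 : HasDerivAt (fun y : ℝ => (1 + y ^ 2) ^ (-(1:ℝ)/2))
      ((-(1:ℝ)/2) * (1 + y ^ 2) ^ (-(1:ℝ)/2 - 1) * (2 * y)) y :=
    HasDerivAt.comp (h₂ := fun t : ℝ => t ^ (-(1:ℝ)/2)) y (Real.hasDerivAt_rpow_const (Or.inl ht.ne')) h1
  have h3 : HasDerivAt (fun y : ℝ => y * (1 + y ^ 2) ^ (-(1:ℝ)/2))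
      (1 * (1 + y ^ 2) ^ (-(1:ℝ)/2) + y * ((-(1:ℝ)/2) * (1 + y ^ 2) ^ (-(1:ℝ)/2 - 1) * (2 * y))) y :=
    (hasDerivAt_id y).mul h2
  rw [h3.deriv, rpow_half _ ht, rpow_threehalf _ ht]
  have hr := rr_pos y
  have hr2 := rr_sq y
  rw [show Real.sqrt (1 + y^2) = rr y from rfl]
  field_simp
  linear_combination hr2

lemma hasDerivAt_GG (x : ℝ) {y : ℝ} (hy : y ≠ x) : HasDerivAt (GG x) (gg x y) y := by
  have hr := rr_pos y; have hs := rr_pos x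
  have hr2 := rr_sq y; have hs2 := rr_sq x
  have hN := NN_pos x y
  have hyx : y - x ≠ 0 := sub_ne_zero.2 hy
  have hR := hasDerivAt_rr y
  have hNder : HasDerivAt (fun y => NN x y) (x + rr x * (y / rr y)) y := by
    unfold NN
    exact ((((hasDerivAt_id y).const_mul x).add_const 1).add (hR.const_mul (rr x))).congr_deriv (by ring)
  have hlogN : HasDerivAt (fun y => Real.log (NN x y))
      ((NN x y)⁻¹ * (x + rr x * (y / rr y))) y :=
    (Real.hasDerivAt_log hN.ne').comp y hNder
  have hlogD : HasDerivAt (fun y => Real.log (y - x)) ((y - x)⁻¹ * 1) y :=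
    HasDerivAt.comp (h₂ := Real.log) y (Real.hasDerivAt_log hyx) ((hasDerivAt_id y).sub_const x)
  have hquot : HasDerivAt (fun y => (x * y - 1) / rr y)
      ((x * rr y - (x * y - 1) * (y / rr y)) / rr y ^ 2) y := by
    have hnum : HasDerivAt (fun y => x * y - 1) x y := by
      simpa using ((hasDerivAt_id y).const_mul x).sub_const 1
    exact hnum.div hR hr.ne'
  have hxy : x - y ≠ 0 := fun h => hyx (by linarith [sub_eq_zero.1 h])
  have hNe : NN x y ≠ 0 := hN.ne'
  have hA : HasDerivAt (fun y => Real.log (NN x y) - Real.log (y - x))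
      (rr x / (rr y * (x - y))) y := by
    refine (hlogN.sub hlogD).congr_deriv (Eq.symm ?_)
    unfold NN at hNe ⊢
    field_simp
    ring_nf
    linear_combination (rr y * hs2 - rr x * hr2) + (rr x * (1 - y * rr y + x * rr y)) * hr2 + (rr y * (-1 + y * rr y - x * rr y)) * hs2 + (rr x * (x - y) * (1 - rr y)) * hr2 + ((x - y) * (rr y ^ 2 - rr y)) * hs2
  have hB : HasDerivAt (fun y => (x * y - 1) / rr y) ((x + y) / rr y ^ 3) y := by
    convert hquot using 1
    field_simp
    linear_combination (-x) * hr2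
  have hmain := ((hA.const_mul (rr x)⁻¹).add hB).const_mul (1 + x ^ 2)⁻¹
  refine hmain.congr_deriv (Eq.symm ?_)
  unfold gg
  field_simp
  linear_combination (-1) * hr2

lemma sqrt_aux (y : ℝ) (hy : 0 < y) : y * Real.sqrt (1 / y ^ 2 + 1) = rr y := by
  rw [rr, ← Real.sqrt_sq hy.le, ← Real.sqrt_mul (by positivity)]
  congr 1
  field_simp
  rw [Real.sq_sqrt (by positivity)]

lemma tendsto_GG_atTop (x : ℝ) : Tendsto (GG x) atTop (nhds (LL x)) := by
  have hs := rr_pos x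
  have hxs : 0 < x + rr x := add_rr_pos x
  have h0 : Tendsto (fun y : ℝ => 1 / y) atTop (nhds 0) := by
    simpa [one_div] using (tendsto_inv_atTop_zero (𝕜 := ℝ))
  have h0' : Tendsto (fun y : ℝ => 1 / y ^ 2) atTop (nhds 0) := by
    have := h0.mul h0
    simpa [mul_comm, pow_two, div_mul_div_comm] using this
  have hsq : Tendsto (fun y : ℝ => Real.sqrt (1 / y ^ 2 + 1)) atTop (nhds 1) := by
    have h1 : Tendsto (fun y : ℝ => 1 / y ^ 2 + 1) atTop (nhds (0 + 1)) := h0'.add_const 1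
    have := (Real.continuous_sqrt.tendsto (0 + 1)).comp h1
    simpa [Function.comp_def] using this
  have hT2 : Tendsto (fun y => (x * y - 1) / rr y) atTop (nhds x) := by
    have h1 : Tendsto (fun y : ℝ => (x - 1 / y) / Real.sqrt (1 / y ^ 2 + 1)) atTop
        (nhds ((x - 0) / 1)) := (tendsto_const_nhds.sub h0).div hsq one_ne_zero
    rw [show (x - 0) / 1 = x by ring] at h1
    apply h1.congr'
    filter_upwards [eventually_gt_atTop 0] with y hy
    rw [← sqrt_aux y hy]
    field_simp
  have hT1 : Tendsto (fun y => Real.log (NN x y) - Real.log (y - x)) atTop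
      (nhds (Real.log (x + rr x))) := by
    have hqden : Tendsto (fun y : ℝ => 1 - x * (1 / y)) atTop (nhds (1 - x * 0)) :=
      tendsto_const_nhds.sub (h0.const_mul x)
    have hq : Tendsto (fun y : ℝ => (x + 1 / y + rr x * Real.sqrt (1 / y ^ 2 + 1)) /
        (1 - x * (1 / y))) atTop (nhds ((x + 0 + rr x * 1) / (1 - x * 0))) :=
      ((tendsto_const_nhds.add h0).add (hsq.const_mul (rr x))).div hqden (by norm_num)
    rw [show (x + 0 + rr x * 1) / (1 - x * 0) = x + rr x by ring] at hq
    have hlog := ((Real.continuousAt_log hxs.ne').tendsto).comp hq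
    apply hlog.congr'
    filter_upwards [eventually_gt_atTop (max x 0)] with y hy
    rw [max_lt_iff] at hy
    obtain ⟨hyx, hy0⟩ := hy
    have hNN := NN_pos x y
    have hyxne : y - x ≠ 0 := sub_ne_zero.2 hyx.ne'
    have hden : 1 - x * (1 / y) ≠ 0 := by
      have he : 1 - x * (1 / y) = (y - x) / y := by field_simp
      rw [he]
      exact div_ne_zero hyxne hy0.ne'
    have hkey : (x + 1 / y + rr x * Real.sqrt (1 / y ^ 2 + 1)) / (1 - x * (1 / y)) =
        NN x y / (y - x) := by
      unfold NN
      rw [← sqrt_aux y hy0]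
      rw [div_eq_div_iff hden hyxne]
      field_simp
    simp only [Function.comp_apply]
    rw [hkey, Real.log_div hNN.ne' hyxne]
  exact (((hT1.const_mul (rr x)⁻¹).add hT2).const_mul (1 + x ^ 2)⁻¹)

lemma tendsto_GG_atBot (x : ℝ) : Tendsto (GG x) atBot (nhds (LL (-x))) := by
  have h := (tendsto_GG_atTop (-x)).comp tendsto_neg_atBot_atTop
  refine h.congr fun y => ?_
  show GG (-x) (-y) = GG x y
  exact GG_symm x y

lemma key_Ioi (x ε : ℝ) (hε : 0 < ε) :
    IntegrableOn (gg x) (Set.Ioi (x + ε)) ∧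
      ∫ y in Set.Ioi (x + ε), gg x y = LL x - GG x (x + ε) := by
  have hderiv : ∀ y ∈ Set.Ici (x + ε), HasDerivAt (GG x) (gg x y) y := fun y hy =>
    hasDerivAt_GG x (by simp only [Set.mem_Ici] at hy; intro h; rw [h] at hy; linarith)
  have hneg : ∀ y ∈ Set.Ioi (x + ε), gg x y ≤ 0 := by
    intro y hy
    simp only [Set.mem_Ioi] at hy
    unfold gg
    apply div_nonpos_of_nonneg_of_nonpos
    · have := rr_pos y; positivity
    · linarith
  exact ⟨integrableOn_Ioi_deriv_of_nonpos' hderiv hneg (tendsto_GG_atTop x),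
    integral_Ioi_of_hasDerivAt_of_nonpos' hderiv hneg (tendsto_GG_atTop x)⟩

lemma key_Iic (x ε : ℝ) (hε : 0 < ε) :
    IntegrableOn (gg x) (Set.Iic (x - ε)) ∧
      ∫ y in Set.Iic (x - ε), gg x y = GG x (x - ε) - LL (-x) := by
  obtain ⟨hint, hval⟩ := key_Ioi (-x) ε hε
  have hmemb : MeasurableEmbedding (fun t : ℝ => -t) :=
    (Homeomorph.neg ℝ).isClosedEmbedding.measurableEmbedding
  have hint2 : IntegrableOn (fun t => gg x (-t)) (Set.Ici (-x + ε)) := by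
    rw [integrableOn_Ici_iff_integrableOn_Ioi]
    have : IntegrableOn (fun t => -gg (-x) t) (Set.Ioi (-x + ε)) := hint.neg
    exact this.congr_fun (fun t _ => (gg_neg x t).symm) measurableSet_Ioi
  constructor
  · have := (MeasurePreserving.integrableOn_comp_preimage
      (Measure.measurePreserving_neg (volume : Measure ℝ)) hmemb
      (f := gg x) (s := Set.Iic (x - ε))).1
    apply this
    have hpre : (fun t : ℝ => -t) ⁻¹' Set.Iic (x - ε) = Set.Ici (-(x - ε)) := by
      ext t; simp [neg_le]
    rw [hpre]
    exact hint2.mono_set (by rw [show -(x - ε) = -x + ε by ring])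
  · have h1 : ∫ y in Set.Iic (x - ε), gg x y = ∫ t in Set.Ioi (-(x - ε)), gg x (-t) := by
      rw [← integral_comp_neg_Iic]
      simp
    rw [h1, show -(x - ε) = -x + ε by ring]
    have h2 : ∫ t in Set.Ioi (-x + ε), gg x (-t) = -∫ t in Set.Ioi (-x + ε), gg (-x) t := by
      rw [← integral_neg]
      exact setIntegral_congr_fun measurableSet_Ioi fun t _ => gg_neg x t
    rw [h2, hval, show -x + ε = -(x - ε) by ring, GG_symm]
    ring

/-- For every `x ∈ ℝ`, the half Laplacian of `u(y) = y(1+y²)^{−1/2}`, i.e. the principal value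
`(1/π)·PV∫ u'(y)/(x−y) dy`, exists and equals
`(2x√(x²+1) + 2·arsinh x)/(π(x²+1)^{3/2})`. -/
theorem halfLaplacian_x_div_sqrt_one_add_sq (x : ℝ) :
    Tendsto (fun ε : ℝ => (1 / Real.pi) *
        ∫ y in {y : ℝ | ε ≤ |x - y|},
          deriv (fun y : ℝ => y * (1 + y ^ 2) ^ (-(1 : ℝ) / 2)) y / (x - y))
      (nhdsWithin 0 (Set.Ioi 0))
      (nhds ((2 * x * Real.sqrt (x ^ 2 + 1) + 2 * Real.arsinh x)
        / (Real.pi * (x ^ 2 + 1) ^ ((3 : ℝ) / 2)))) := by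
  have hs := rr_pos x
  have hs2 := rr_sq x
  have hxs : 0 < x + rr x := add_rr_pos x
  -- rewrite the integrand as `gg x`
  have hfun : ∀ ε : ℝ, (∫ y in {y : ℝ | ε ≤ |x - y|},
      deriv (fun y : ℝ => y * (1 + y ^ 2) ^ (-(1 : ℝ) / 2)) y / (x - y)) =
      ∫ y in {y : ℝ | ε ≤ |x - y|}, gg x y := by
    intro ε
    simp only [deriv_u]
    rfl
  -- value of the truncated integral
  have hval : ∀ ε ∈ Set.Ioi (0:ℝ), (∫ y in {y : ℝ | ε ≤ |x - y|}, gg x y) =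
      (GG x (x - ε) - GG x (x + ε)) + (LL x - LL (-x)) := by
    intro ε hε
    rw [Set.mem_Ioi] at hε
    have hset : {y : ℝ | ε ≤ |x - y|} = Set.Iic (x - ε) ∪ Set.Ici (x + ε) := by
      ext y
      simp only [Set.mem_setOf_eq, Set.mem_union, Set.mem_Iic, Set.mem_Ici, le_abs]
      constructor
      · rintro (h | h)
        · left; linarith
        · right; linarith
      · rintro (h | h)
        · left; linarith
        · right; linarith
    obtain ⟨hint1, hval1⟩ := key_Iic x ε hε
    obtain ⟨hint2, hval2⟩ := key_Ioi x ε hε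
    have hdisj : Disjoint (Set.Iic (x - ε)) (Set.Ici (x + ε)) := by
      apply Set.disjoint_left.2
      intro y hy1 hy2
      simp only [Set.mem_Iic] at hy1
      simp only [Set.mem_Ici] at hy2
      linarith
    rw [hset, setIntegral_union hdisj measurableSet_Ici hint1
      ((integrableOn_Ici_iff_integrableOn_Ioi (hb := enorm_ne_top)).2 hint2), hval1,
      integral_Ici_eq_integral_Ioi, hval2]
    ring
  -- the boundary difference tends to zero
  have hdiff : Tendsto (fun ε => GG x (x - ε) - GG x (x + ε))
      (nhdsWithin 0 (Set.Ioi 0)) (nhds 0) := by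
    set Φ : ℝ → ℝ := fun ε => (1 + x ^ 2)⁻¹ *
      ((rr x)⁻¹ * (Real.log (NN x (x - ε)) - Real.log (NN x (x + ε))) +
        ((x * (x - ε) - 1) / rr (x - ε) - (x * (x + ε) - 1) / rr (x + ε))) with hΦ
    have hc1 : Continuous fun ε : ℝ => NN x (x - ε) :=
      (continuous_NN x).comp (continuous_const.sub continuous_id)
    have hc2 : Continuous fun ε : ℝ => NN x (x + ε) :=
      (continuous_NN x).comp (continuous_const.add continuous_id)
    have hin1 : ContinuousAt (fun ε : ℝ => x - ε) 0 := by fun_prop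
    have hin2 : ContinuousAt (fun ε : ℝ => x + ε) 0 := by fun_prop
    have hmid1 : ContinuousAt (fun ε : ℝ => NN x (x - ε)) 0 :=
      ((continuous_NN x).continuousAt (x := x - 0)).comp hin1
    have hmid2 : ContinuousAt (fun ε : ℝ => NN x (x + ε)) 0 :=
      ((continuous_NN x).continuousAt (x := x + 0)).comp hin2
    have hl1 : ContinuousAt (fun ε : ℝ => Real.log (NN x (x - ε))) 0 :=
      ContinuousAt.comp (g := Real.log) (f := fun ε : ℝ => NN x (x - ε)) (x := (0:ℝ))
        (Real.continuousAt_log (NN_pos x (x - 0)).ne') hmid1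
    have hl2 : ContinuousAt (fun ε : ℝ => Real.log (NN x (x + ε))) 0 :=
      ContinuousAt.comp (g := Real.log) (f := fun ε : ℝ => NN x (x + ε)) (x := (0:ℝ))
        (Real.continuousAt_log (NN_pos x (x + 0)).ne') hmid2
    have hd1 : ContinuousAt (fun ε : ℝ => (x * (x - ε) - 1) / rr (x - ε)) 0 := by
      apply ContinuousAt.div
      · fun_prop
      · exact (continuous_rr.comp (continuous_const.sub continuous_id)).continuousAt
      · exact (rr_pos (x - 0)).ne'
    have hd2 : ContinuousAt (fun ε : ℝ => (x * (x + ε) - 1) / rr (x + ε)) 0 := by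
      apply ContinuousAt.div
      · fun_prop
      · exact (continuous_rr.comp (continuous_const.add continuous_id)).continuousAt
      · exact (rr_pos (x + 0)).ne'
    have hΦcont : ContinuousAt Φ 0 := by
      apply ContinuousAt.mul continuousAt_const
      exact ((hl1.sub hl2).const_mul _).add (hd1.sub hd2)
    have hΦ0 : Φ 0 = 0 := by
      simp only [hΦ, sub_zero, add_zero, sub_self, mul_zero]
    have htend : Tendsto Φ (nhdsWithin 0 (Set.Ioi 0)) (nhds 0) := by
      have := hΦcont.tendsto
      rw [hΦ0] at this
      exact this.mono_left nhdsWithin_le_nhds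
    apply htend.congr'
    filter_upwards [self_mem_nhdsWithin] with ε hε
    rw [Set.mem_Ioi] at hε
    show Φ ε = GG x (x - ε) - GG x (x + ε)
    unfold GG
    rw [show x - ε - x = -ε by ring, show x + ε - x = ε by ring, Real.log_neg_eq_log]
    ring
  -- combine
  have hmain : Tendsto (fun ε => (1 / Real.pi) *
      ((GG x (x - ε) - GG x (x + ε)) + (LL x - LL (-x))))
      (nhdsWithin 0 (Set.Ioi 0)) (nhds ((1 / Real.pi) * (0 + (LL x - LL (-x))))) :=
    (hdiff.add tendsto_const_nhds).const_mul _
  have hLLval : (1 / Real.pi) * (0 + (LL x - LL (-x))) =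
      (2 * x * Real.sqrt (x ^ 2 + 1) + 2 * Real.arsinh x)
        / (Real.pi * (x ^ 2 + 1) ^ ((3 : ℝ) / 2)) := by
    have hrrx : Real.sqrt (x ^ 2 + 1) = rr x := by rw [rr, add_comm]
    have hpow : ((x : ℝ) ^ 2 + 1) ^ ((3 : ℝ) / 2) = rr x ^ 3 := by
      rw [show ((3:ℝ)/2) = (1/2) * (3:ℕ) by norm_num, Real.rpow_mul (by positivity),
        Real.rpow_natCast, ← Real.sqrt_eq_rpow, hrrx]
    have harsinh : Real.arsinh x = Real.log (x + rr x) := rfl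
    have hloginv : Real.log (-x + rr x) = - Real.log (x + rr x) := by
      have hinv : -x + rr x = (x + rr x)⁻¹ := by
        apply eq_inv_of_mul_eq_one_left
        linear_combination hs2
      rw [hinv, Real.log_inv]
    unfold LL
    rw [rr_neg, hpow, hrrx, harsinh, hloginv]
    have hπ : Real.pi ≠ 0 := Real.pi_ne_zero
    rw [show (1 + (-x) ^ 2 : ℝ) = 1 + x ^ 2 by ring]
    field_simp
    ring_nf
    linear_combination (2 * rr x * x + 2 * Real.log (rr x + x)) * hs2
  rw [← hLLval]
  apply hmain.congr'
  filter_upwards [self_mem_nhdsWithin] with ε hε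
  rw [hfun ε, hval ε hε]
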